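/- arXiv:1806.02753 — 3 statements merged into one kernel-verified Lean document; each statement's English description precedes it below -/
import Mathlib

section
/- Let G be a group acting transitively on a set X. Suppose there exists a finitely additive probability measure m on the power set of G such that for all x, y ∈ X, the pushforward measures m·x and m·y on X coincide, where (m·x)(A) = m({g ∈ G : gx ∈ A}). Then for every ε > 0 and every finite subset F ⊆ X there exists a nonempty finite multiset (or finite sequence) E of elements of G such that |Ex Δ Ey| ≤ ε|E| for all x, y ∈ F, where Ex denotes the multiset {gx : g ∈ E} and Δ is symmetric difference counted with multiplicity. -/
/-!
Send `g ∈ G` to `v g = (δ_{g • x} - δ_{g • y})_{(x, y) ∈ F × F}` in `ℓ¹((F × F) × X)`.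
If `0` were not in the closed convex hull of the `v g`, Hahn–Banach would give bounded functions
`φ_{x,y}` on `X` with `∑ (φ_{x,y} (g • x) - φ_{x,y} (g • y)) ≤ u < 0` for every `g`. After
rounding the `φ_{x,y}` to finitely many values this can be averaged against `m`, and the
invariance `m·x = m·y` makes the average `0`, a contradiction. So some convex combination of the
`v g` has small norm, and rounding its weights to multiplicities gives the multiset `E`.
-/

open scoped symmDiff

/-- Multiset symmetric difference, counted with multiplicity. -/
def msymmDiff {α : Type*} [DecidableEq α] (s t : Multiset α) : Multiset α :=
  (s - t) + (t - s)

namespace FinitelyAdditive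

variable {G Y Z : Type*} {m : Set G → ℝ}

theorem measure_empty (hadd : ∀ A B : Set G, Disjoint A B → m (A ∪ B) = m A + m B) :
    m ∅ = 0 := by
  simpa using hadd ∅ ∅ (Set.disjoint_empty ∅)

theorem measure_preimage_finset (hadd : ∀ A B : Set G, Disjoint A B → m (A ∪ B) = m A + m B)
    (π : G → Y) (T : Finset Y) : m (π ⁻¹' T) = ∑ y ∈ T, m (π ⁻¹' {y}) := by
  classical
  induction T using Finset.induction_on with
  | empty => simpa using measure_empty hadd
  | insert y T hy ih =>
    rw [Finset.sum_insert hy, ← ih, Finset.coe_insert, Set.insert_eq, Set.preimage_union,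
      hadd _ _ ((Set.disjoint_singleton_left.2 hy).preimage π)]

variable [Fintype Y]

/-- The mean, with respect to `m`, of the simple function `φ ∘ π`. -/
@[simps]
def simpleMean (m : Set G → ℝ) (π : G → Y) : (Y → ℝ) →ₗ[ℝ] ℝ where
  toFun φ := ∑ y, φ y * m (π ⁻¹' {y})
  map_add' φ ψ := by simp only [Pi.add_apply, add_mul, Finset.sum_add_distrib]
  map_smul' c φ := by simp only [Pi.smul_apply, smul_eq_mul, mul_assoc, Finset.mul_sum,
    RingHom.id_apply]

theorem simpleMean_le (hm0 : ∀ A, 0 ≤ m A) (hm1 : m Set.univ = 1)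
    (hadd : ∀ A B : Set G, Disjoint A B → m (A ∪ B) = m A + m B)
    {π : G → Y} {φ : Y → ℝ} {u : ℝ} (h : ∀ g, φ (π g) ≤ u) : simpleMean m π φ ≤ u := by
  have hfiber : ∀ y, φ y * m (π ⁻¹' {y}) ≤ u * m (π ⁻¹' {y}) := by
    intro y
    rcases (π ⁻¹' {y}).eq_empty_or_nonempty with hy | ⟨g, rfl⟩
    · simp [hy, measure_empty hadd]
    · exact mul_le_mul_of_nonneg_right (h g) (hm0 _)
  calc simpleMean m π φ ≤ ∑ y, u * m (π ⁻¹' {y}) := Finset.sum_le_sum fun y _ => hfiber y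
    _ = u := by
      rw [← Finset.mul_sum, ← measure_preimage_finset hadd, Finset.coe_univ,
        Set.preimage_univ, hm1, mul_one]

theorem exists_simpleMean_le [Nonempty G] (hm0 : ∀ A, 0 ≤ m A) (hm1 : m Set.univ = 1)
    (hadd : ∀ A B : Set G, Disjoint A B → m (A ∪ B) = m A + m B) (π : G → Y) (φ : Y → ℝ) :
    ∃ g, simpleMean m π φ ≤ φ (π g) := by
  obtain ⟨⟨_, g, rfl⟩, hg⟩ := Finite.exists_max fun y : Set.range π => φ y
  exact ⟨g, simpleMean_le hm0 hm1 hadd fun g' => hg ⟨π g', g', rfl⟩⟩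

theorem simpleMean_comp [Fintype Z] [DecidableEq Z]
    (hadd : ∀ A B : Set G, Disjoint A B → m (A ∪ B) = m A + m B)
    (π : G → Y) (ψ : Y → Z) (φ : Z → ℝ) : simpleMean m π (φ ∘ ψ) = simpleMean m (ψ ∘ π) φ := by
  have hfiber : ∀ z, (ψ ∘ π) ⁻¹' {z} = π ⁻¹' ↑(Finset.univ.filter fun y => ψ y = z) := by
    intro z; ext g; simp
  simp only [simpleMean_apply, hfiber, measure_preimage_finset hadd, Finset.mul_sum]
  rw [← Finset.sum_fiberwise Finset.univ ψ]
  refine Finset.sum_congr rfl fun z _ => Finset.sum_congr rfl fun y hy => ?_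
  rw [Function.comp_apply, (Finset.mem_filter.1 hy).2]

variable {X : Type*} [Group G] [MulAction G X]

theorem simpleMean_comp_smul_eq
    (hinv : ∀ (x y : X) (A : Set X), m {g : G | g • x ∈ A} = m {g : G | g • y ∈ A})
    (c : X → Y) (x y : X) (φ : Y → ℝ) :
    simpleMean m (fun g : G => c (g • x)) φ = simpleMean m (fun g : G => c (g • y)) φ := by
  simp only [simpleMean_apply]
  exact Finset.sum_congr rfl fun s _ => congrArg _ (hinv x y (c ⁻¹' {s}))

theorem exists_sum_sub_nonneg {ι S : Type*} [Fintype ι] [Fintype S]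
    (hm0 : ∀ A, 0 ≤ m A) (hm1 : m Set.univ = 1)
    (hadd : ∀ A B : Set G, Disjoint A B → m (A ∪ B) = m A + m B)
    (hinv : ∀ (x y : X) (A : Set X), m {g : G | g • x ∈ A} = m {g : G | g • y ∈ A})
    (c : ι → X → S) (φ : S → ℝ) (x y : ι → X) :
    ∃ g : G, 0 ≤ ∑ i, (φ (c i (g • x i)) - φ (c i (g • y i))) := by
  classical
  let π : G → ι → S × S := fun g i => (c i (g • x i), c i (g • y i))
  obtain ⟨g, hg⟩ := exists_simpleMean_le hm0 hm1 hadd π fun σ => ∑ i, (φ (σ i).1 - φ (σ i).2)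
  refine ⟨g, le_of_eq_of_le ?_ hg⟩
  have hlin : simpleMean m π (fun σ => ∑ i, (φ (σ i).1 - φ (σ i).2)) =
      ∑ i, (simpleMean m π (φ ∘ Prod.fst ∘ Function.eval i) -
        simpleMean m π (φ ∘ Prod.snd ∘ Function.eval i)) := by
    simp only [← map_sub, ← map_sum]
    congr 1
    ext σ
    simp [Finset.sum_apply]
  refine (hlin.trans (Finset.sum_eq_zero fun i _ => ?_)).symm
  rw [simpleMean_comp hadd, simpleMean_comp hadd, sub_eq_zero]
  exact simpleMean_comp_smul_eq hinv _ _ _ _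

theorem exists_neg_le_sum_sub {ι : Type*} [Fintype ι]
    (hm0 : ∀ A, 0 ≤ m A) (hm1 : m Set.univ = 1)
    (hadd : ∀ A B : Set G, Disjoint A B → m (A ∪ B) = m A + m B)
    (hinv : ∀ (x y : X) (A : Set X), m {g : G | g • x ∈ A} = m {g : G | g • y ∈ A})
    {φ : ι → X → ℝ} {M : ℝ} (hφ : ∀ i a, |φ i a| ≤ M) (x y : ι → X) {δ : ℝ} (hδ : 0 < δ) :
    ∃ g : G, -δ ≤ ∑ i, (φ i (g • x i) - φ i (g • y i)) := by
  -- Rounding `n • φ i` down makes it finitely valued at a cost of at most `card ι / n < δ`.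
  obtain ⟨n, hn⟩ := exists_nat_gt (Fintype.card ι / δ)
  have hn0 : (0 : ℝ) < n := (by positivity : (0 : ℝ) ≤ Fintype.card ι / δ).trans_lt hn
  set K := ⌈n * M⌉
  have hmem : ∀ i a, ⌊n * φ i a⌋ ∈ Finset.Icc (-K) K := by
    intro i a
    have h := abs_le.1 (hφ i a)
    have hK := Int.le_ceil ((n : ℝ) * M)
    rw [Finset.mem_Icc, Int.le_floor, Int.floor_le_iff]
    push_cast
    constructor <;> nlinarith
  obtain ⟨g, hg⟩ := exists_sum_sub_nonneg hm0 hm1 hadd hinv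
    (fun i a => (⟨⌊n * φ i a⌋, hmem i a⟩ : Finset.Icc (-K) K)) (fun k => ((k : ℤ) : ℝ)) x y
  refine ⟨g, ?_⟩
  have hfloor : ∀ i, (⌊n * φ i (g • x i)⌋ : ℝ) - ⌊n * φ i (g • y i)⌋ ≤
      n * (φ i (g • x i) - φ i (g • y i)) + 1 := fun i => by
    linarith [Int.floor_le ((n : ℝ) * φ i (g • x i)),
      Int.lt_floor_add_one ((n : ℝ) * φ i (g • y i))]
  have hsum : 0 ≤ n * ∑ i, (φ i (g • x i) - φ i (g • y i)) + Fintype.card ι := by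
    refine hg.trans ((Finset.sum_le_sum fun i _ => hfloor i).trans_eq ?_)
    rw [Finset.sum_add_distrib, Finset.mul_sum]
    simp
  rw [div_lt_iff₀ hδ] at hn
  nlinarith

end FinitelyAdditive

theorem natCast_sub_add_natCast_sub {R : Type*} [Ring R] [LinearOrder R] [IsStrictOrderedRing R]
    (a b : ℕ) : ((a - b : ℕ) : R) + ((b - a : ℕ) : R) = |(a : R) - b| := by
  rcases le_total a b with h | h
  · rw [Nat.sub_eq_zero_of_le h, Nat.cast_sub h, abs_of_nonpos (by simpa using h)]; simp
  · rw [Nat.sub_eq_zero_of_le h, Nat.cast_sub h, abs_of_nonneg (by simpa using h)]; simp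

theorem card_msymmDiff {α : Type*} [DecidableEq α] (s t : Multiset α) :
    ((msymmDiff s t).card : ℝ) =
      ∑ a ∈ (s + t).toFinset, |(s.count a : ℝ) - t.count a| := by
  have hst : ∀ a ∈ s - t, a ∈ (s + t).toFinset := fun a ha => by
    simpa using Or.inl (Multiset.mem_of_le (Multiset.sub_le_self s t) ha)
  have hts : ∀ a ∈ t - s, a ∈ (s + t).toFinset := fun a ha => by
    simpa using Or.inr (Multiset.mem_of_le (Multiset.sub_le_self t s) ha)
  rw [msymmDiff, Multiset.card_add, ← Multiset.sum_count_eq_card hst,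
    ← Multiset.sum_count_eq_card hts]
  push_cast
  rw [← Finset.sum_add_distrib]
  simp only [Multiset.count_sub, natCast_sub_add_natCast_sub]

section diracDiff

variable {G X ι : Type*} [SMul G X] [DecidableEq X] [DecidableEq ι] [Fintype ι]

noncomputable def diracDiff (x y : ι → X) (g : G) : lp (fun _ : ι × X => ℝ) 1 :=
  ∑ i, (lp.single 1 (i, g • x i) 1 - lp.single 1 (i, g • y i) 1)

theorem diracDiff_apply (x y : ι → X) (g : G) (i : ι) (a : X) :
    diracDiff x y g (i, a) = (if a = g • x i then 1 else 0) - (if a = g • y i then 1 else 0) := by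
  simp only [diracDiff, lp.coeFn_sum, lp.coeFn_sub, lp.coeFn_single, Finset.sum_apply,
    Pi.sub_apply, Finset.sum_sub_distrib, Pi.single_apply, Prod.mk.injEq, ite_and,
    Finset.sum_ite_eq, Finset.mem_univ, if_true]

theorem norm_diracDiff_le (x y : ι → X) (g : G) :
    ‖diracDiff x y g‖ ≤ 2 * Fintype.card ι := by
  have hsingle : ∀ b, ‖(lp.single 1 b 1 : lp (fun _ : ι × X => ℝ) 1)‖ = 1 := fun b => by
    rw [lp.norm_single one_pos, norm_one]
  calc ‖diracDiff x y g‖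
      ≤ ∑ i, ‖(lp.single 1 (i, g • x i) 1 - lp.single 1 (i, g • y i) 1 :
          lp (fun _ : ι × X => ℝ) 1)‖ := norm_sum_le _ _
    _ ≤ ∑ _i : ι, (2 : ℝ) := Finset.sum_le_sum fun i _ =>
        (norm_sub_le _ _).trans_eq (by rw [hsingle, hsingle]; norm_num)
    _ = 2 * Fintype.card ι := by simp [mul_comm]

theorem sum_map_diracDiff_apply (x y : ι → X) (E : Multiset G) (i : ι) (a : X) :
    (E.map (diracDiff x y)).sum (i, a) =
      ((E.map (· • x i)).count a : ℝ) - (E.map (· • y i)).count a := by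
  induction E using Multiset.induction_on with
  | empty => simp
  | cons g E ih =>
    simp only [Multiset.map_cons, Multiset.sum_cons, lp.coeFn_add, Pi.add_apply, ih,
      diracDiff_apply, Multiset.count_cons]
    push_cast
    ring

theorem card_msymmDiff_le_norm_sum_map_diracDiff (x y : ι → X) (E : Multiset G)
    (i : ι) :
    ((msymmDiff (E.map (· • x i)) (E.map (· • y i))).card : ℝ) ≤
      ‖(E.map (diracDiff x y)).sum‖ := by
  have h := lp.sum_rpow_le_norm_rpow (by norm_num) (E.map (diracDiff x y)).sum
    (((E.map (· • x i)) + (E.map (· • y i))).toFinset.map ⟨(i, ·), fun _ _ h => (Prod.mk.inj h).2⟩)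
  simp only [Finset.sum_map, ENNReal.toReal_one, Real.rpow_one, Real.norm_eq_abs] at h
  rw [card_msymmDiff]
  exact le_of_eq_of_le (Finset.sum_congr rfl fun a _ =>
    congrArg abs (sum_map_diracDiff_apply x y E i a).symm) h

end diracDiff

section Rounding

open Finset

variable {α V : Type*} {s : Finset α} {μ : α → ℝ}

theorem card_sum_replicate_floor_mul_mem_Icc (hμ0 : ∀ a ∈ s, 0 ≤ μ a) (hμ1 : ∑ a ∈ s, μ a = 1)
    (n : ℕ) :
    ((∑ a ∈ s, Multiset.replicate ⌊n * μ a⌋₊ a).card : ℝ) ∈ Set.Icc ((n : ℝ) - #s) n := by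
  have hle := sum_le_sum fun a ha => Nat.floor_le (mul_nonneg n.cast_nonneg (hμ0 a ha))
  have hlt := sum_le_sum fun a (_ : a ∈ s) => (Nat.lt_floor_add_one ((n : ℝ) * μ a)).le
  rw [← mul_sum, hμ1, mul_one] at hle hlt
  rw [sum_add_distrib, sum_const, nsmul_one] at hlt
  simp only [Multiset.card_sum, Multiset.card_replicate, Nat.cast_sum, Set.mem_Icc]
  constructor <;> linarith

theorem norm_sum_map_sum_replicate_floor_mul_sub_le [SeminormedAddCommGroup V] [NormedSpace ℝ V]
    (hμ0 : ∀ a ∈ s, 0 ≤ μ a) {v : α → V} {C : ℝ} (hv : ∀ a ∈ s, ‖v a‖ ≤ C) (n : ℕ) :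
    ‖((∑ a ∈ s, Multiset.replicate ⌊n * μ a⌋₊ a).map v).sum - (n : ℝ) • ∑ a ∈ s, μ a • v a‖ ≤
      #s * C := by
  have hsum : ((∑ a ∈ s, Multiset.replicate ⌊n * μ a⌋₊ a).map v).sum =
      ∑ a ∈ s, (⌊n * μ a⌋₊ : ℝ) • v a := by
    change Multiset.sumAddMonoidHom (Multiset.mapAddMonoidHom v _) = _
    simp [map_sum, Multiset.map_replicate, Multiset.sum_replicate, Nat.cast_smul_eq_nsmul]
  calc _ = ‖∑ a ∈ s, ((⌊n * μ a⌋₊ : ℝ) - n * μ a) • v a‖ := by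
        simp only [hsum, smul_sum, smul_smul, ← sum_sub_distrib, sub_smul]
    _ ≤ ∑ _a ∈ s, C := (norm_sum_le _ _).trans <| sum_le_sum fun a ha => by
        have hfloor : |(⌊n * μ a⌋₊ : ℝ) - n * μ a| ≤ 1 := abs_le.2
          ⟨by linarith [Nat.lt_floor_add_one ((n : ℝ) * μ a)],
            by linarith [Nat.floor_le (mul_nonneg n.cast_nonneg (hμ0 a ha))]⟩
        rw [norm_smul, Real.norm_eq_abs]
        nlinarith [hv a ha, norm_nonneg (v a), abs_nonneg ((⌊n * μ a⌋₊ : ℝ) - n * μ a)]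
    _ = #s * C := by rw [sum_const, nsmul_eq_mul]

theorem exists_multiset_norm_sum_map_sub_le [SeminormedAddCommGroup V] [NormedSpace ℝ V]
    {v : α → V} {C : ℝ} (hv : ∀ a, ‖v a‖ ≤ C) {w : V} (hw : w ∈ convexHull ℝ (Set.range v))
    {δ : ℝ} (hδ : 0 < δ) :
    ∃ E : Multiset α, E ≠ 0 ∧ ‖(E.map v).sum - (E.card : ℝ) • w‖ ≤ δ * E.card := by
  classical
  have hwC : ‖w‖ ≤ C := by
    simpa using convexHull_min (by rintro _ ⟨a, rfl⟩; simpa using hv a)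
      (convex_closedBall (0 : V) C) hw
  rw [convexHull_range_eq_exists_affineCombination] at hw
  obtain ⟨s, μ, hμ0, hμ1, rfl⟩ := hw
  rw [affineCombination_eq_linear_combination _ _ _ hμ1] at hwC ⊢
  obtain ⟨a₀, -⟩ : s.Nonempty := nonempty_of_sum_ne_zero (by rw [hμ1]; exact one_ne_zero)
  have hC : 0 ≤ C := (norm_nonneg _).trans (hv a₀)
  -- Take `⌊n μ a⌋` copies of each `a`: both rounding errors below are at most `#s * C`.
  obtain ⟨n, hn⟩ := exists_nat_gt (#s + 2 * #s * C / δ)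
  obtain ⟨hN, hN'⟩ := card_sum_replicate_floor_mul_mem_Icc hμ0 hμ1 n
  have hround := norm_sum_map_sum_replicate_floor_mul_sub_le hμ0 (fun a _ => hv a) n
  set E := ∑ a ∈ s, Multiset.replicate ⌊n * μ a⌋₊ a
  have hgap : 2 * #s * C < δ * (n - #s) := by
    rw [mul_comm δ, ← div_lt_iff₀ hδ]
    linarith
  refine ⟨E, fun hE => ?_, ?_⟩
  · simp only [hE, Multiset.card_zero, Nat.cast_zero] at hN
    nlinarith [(by positivity : 0 ≤ 2 * #s * C)]
  · calc _ = ‖((E.map v).sum - (n : ℝ) • ∑ a ∈ s, μ a • v a) +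
          ((n : ℝ) - E.card) • ∑ a ∈ s, μ a • v a‖ := by rw [sub_smul]; abel_nf
      _ ≤ #s * C + (n - E.card) * C := by
          refine norm_add_le_of_le hround ?_
          rw [norm_smul, Real.norm_of_nonneg (by linarith)]
          exact mul_le_mul_of_nonneg_left hwC (by linarith)
      _ ≤ δ * E.card := by
          nlinarith [mul_le_mul_of_nonneg_right (by linarith : (n : ℝ) - E.card ≤ #s) hC,
            mul_le_mul_of_nonneg_left hN hδ.le]

end Rounding

theorem zero_mem_closure_convexHull_range_diracDiff {G X ι : Type*} [Group G] [MulAction G X]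
    [DecidableEq X] [DecidableEq ι] [Fintype ι] {m : Set G → ℝ}
    (hm0 : ∀ A, 0 ≤ m A) (hm1 : m Set.univ = 1)
    (hadd : ∀ A B : Set G, Disjoint A B → m (A ∪ B) = m A + m B)
    (hinv : ∀ (x y : X) (A : Set X), m {g : G | g • x ∈ A} = m {g : G | g • y ∈ A})
    (x y : ι → X) :
    (0 : lp (fun _ : ι × X => ℝ) 1) ∈
      closure (convexHull ℝ (Set.range (diracDiff (G := G) x y))) := by
  by_contra h
  obtain ⟨f, u, hfu, hu⟩ := geometric_hahn_banach_closed_point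
    (convex_convexHull ℝ _).closure isClosed_closure h
  rw [map_zero] at hu
  have hφ : ∀ i a, |f (lp.single 1 (i, a) 1)| ≤ ‖f‖ := fun i a => by
    simpa [lp.norm_single one_pos] using f.le_opNorm (lp.single 1 (i, a) 1)
  obtain ⟨g, hg⟩ := FinitelyAdditive.exists_neg_le_sum_sub hm0 hm1 hadd hinv hφ x y (neg_pos.2 hu)
  have hfg : f (diracDiff x y g) =
      ∑ i, (f (lp.single 1 (i, g • x i) 1) - f (lp.single 1 (i, g • y i) 1)) := by
    simp only [diracDiff, map_sum, map_sub]
  have := hfu _ (subset_closure (subset_convexHull ℝ _ ⟨g, rfl⟩))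
  linarith

theorem stmt1_general {G X : Type*} [Group G] [MulAction G X] [DecidableEq X]
    (m : Set G → ℝ)
    (hm0 : ∀ A, 0 ≤ m A) (hm1 : m Set.univ = 1)
    (hadd : ∀ A B : Set G, Disjoint A B → m (A ∪ B) = m A + m B)
    (hinv : ∀ (x y : X) (A : Set X),
      m {g : G | g • x ∈ A} = m {g : G | g • y ∈ A}) :
    ∀ ε > (0 : ℝ), ∀ F : Finset X, ∃ E : Multiset G, E ≠ 0 ∧
      ∀ x ∈ F, ∀ y ∈ F,
        ((msymmDiff (E.map (· • x)) (E.map (· • y))).card : ℝ) ≤ ε * E.card := by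
  intro ε hε F
  let x : F × F → X := fun i => i.1
  let y : F × F → X := fun i => i.2
  obtain ⟨w, hw, hwε⟩ : ∃ w ∈ convexHull ℝ (Set.range (diracDiff (G := G) x y)), ‖w‖ < ε / 2 := by
    obtain ⟨w, hw, hdist⟩ := Metric.mem_closure_iff.1
      (zero_mem_closure_convexHull_range_diracDiff hm0 hm1 hadd hinv x y) (ε / 2) (by positivity)
    exact ⟨w, hw, by rwa [dist_zero_left] at hdist⟩
  obtain ⟨E, hE, hEw⟩ :=
    exists_multiset_norm_sum_map_sub_le (norm_diracDiff_le x y) hw (half_pos hε)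
  refine ⟨E, hE, fun a ha b hb => ?_⟩
  calc _ ≤ ‖(E.map (diracDiff x y)).sum‖ :=
        card_msymmDiff_le_norm_sum_map_diracDiff x y E (⟨a, ha⟩, ⟨b, hb⟩)
    _ ≤ ‖(E.map (diracDiff x y)).sum - (E.card : ℝ) • w‖ + ‖(E.card : ℝ) • w‖ :=
        norm_le_norm_sub_add _ _
    _ ≤ ε / 2 * E.card + E.card * (ε / 2) := by
        rw [norm_smul, Real.norm_natCast]
        gcongr
    _ = ε * E.card := by ring

/-- If a group G acting transitively on X admits a finitely additive
probability measure m whose pushforwards m·x agree for all x ∈ X, then for every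
ε > 0 and finite F ⊆ X there is a nonempty finite multiset E of elements of G with
|Ex Δ Ey| ≤ ε|E| for all x, y ∈ F (multiset cardinalities). -/
theorem stmt1 {G X : Type*} [Group G] [MulAction G X] [DecidableEq X]
    [MulAction.IsPretransitive G X]
    (m : Set G → ℝ)
    (hm0 : ∀ A, 0 ≤ m A) (hm1 : m Set.univ = 1)
    (hadd : ∀ A B : Set G, Disjoint A B → m (A ∪ B) = m A + m B)
    (hinv : ∀ (x y : X) (A : Set X),
      m {g : G | g • x ∈ A} = m {g : G | g • y ∈ A}) :
    ∀ ε > (0 : ℝ), ∀ F : Finset X, ∃ E : Multiset G, E ≠ 0 ∧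
      ∀ x ∈ F, ∀ y ∈ F,
        ((msymmDiff (E.map (· • x)) (E.map (· • y))).card : ℝ) ≤ ε * E.card :=
  stmt1_general m hm0 hm1 hadd hinv
end

section
/- Let n ≥ 1 and r₁, …, r_{n-1} be positive integers, and let S be the set of all sums r_i + r_{i+1} + ⋯ + r_j for 1 ≤ i ≤ j ≤ n-1. For every ε > 0 there exists a nonempty finite set A ⊆ ℕ such that |cA Δ c'A| ≤ ε|A| for all c, c' ∈ S, where cA = {ca : a ∈ A}. Consequently, the finite set W = {(r₁a, r₂a, …, r_{n-1}a) : a ∈ A} ⊆ ℕ^{n-1} satisfies: for all 1 ≤ i ≤ j ≤ n-1 and 1 ≤ i' ≤ j' ≤ n-1, the multisets {p_i(w)+⋯+p_j(w) : w ∈ W} and {p_{i'}(w)+⋯+p_{j'}(w) : w ∈ W} satisfy |{p_i(w)+⋯+p_j(w) : w ∈ W} Δ {p_{i'}(w)+⋯+p_{j'}(w) : w ∈ W}| ≤ ε|W| (multisets counted with multiplicity). -/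
open scoped symmDiff

lemma card_div_pow (P : ℕ) (hP : 0 < P) (k : ℕ) (hk : 0 < k) :
    (P ^ k).divisors.card = ∏ p ∈ P.primeFactors, (k * P.factorization p + 1) := by
  rw [Nat.card_divisors (pow_ne_zero _ hP.ne')]
  rw [Nat.primeFactors_pow _ hk.ne']
  apply Finset.prod_congr rfl
  intro p _
  rw [Nat.factorization_pow, Finsupp.smul_apply, smul_eq_mul]

lemma aux_sdiff (P m : ℕ) (hP : 0 < P) (hm : 2 ≤ m) {c c' : ℕ} (_hc : 0 < c) (hc' : 0 < c')
    (hcP : c ∣ P) (hc'P : c' ∣ P) :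
    ((P ^ m).divisors.image (c * ·) \ (P ^ m).divisors.image (c' * ·)).card
      ≤ (P ^ m).divisors.card - (P ^ (m - 2)).divisors.card := by
  set A := (P ^ m).divisors with hA
  set B := (P ^ (m - 2)).divisors.image (c' * ·) with hB
  have hPm : (P ^ m) ≠ 0 := pow_ne_zero _ hP.ne'
  have hdvdPm : ∀ x : ℕ, x ∣ P * P ^ (m - 2) → x ∣ P ^ m := by
    intro x hx
    refine hx.trans ?_
    rw [← pow_succ']
    exact pow_dvd_pow P (by omega)
  have hBA : B ⊆ A := by
    intro x hx
    rw [hB, Finset.mem_image] at hx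
    obtain ⟨z, hz, rfl⟩ := hx
    rw [hA, Nat.mem_divisors]
    exact ⟨hdvdPm _ (mul_dvd_mul hc'P (Nat.mem_divisors.1 hz).1), hPm⟩
  have key : A.image (c * ·) \ A.image (c' * ·) ⊆ (A \ B).image (c * ·) := by
    intro y hy
    rw [Finset.mem_sdiff] at hy
    obtain ⟨hy1, hy2⟩ := hy
    rw [Finset.mem_image] at hy1
    obtain ⟨x, hx, rfl⟩ := hy1
    refine Finset.mem_image.2 ⟨x, Finset.mem_sdiff.2 ⟨hx, ?_⟩, rfl⟩
    intro hxB
    rw [hB, Finset.mem_image] at hxB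
    obtain ⟨z, hz, rfl⟩ := hxB
    apply hy2
    refine Finset.mem_image.2 ⟨c * z, ?_, by ring⟩
    rw [hA, Nat.mem_divisors]
    exact ⟨hdvdPm _ (mul_dvd_mul hcP (Nat.mem_divisors.1 hz).1), hPm⟩
  calc (A.image (c * ·) \ A.image (c' * ·)).card ≤ ((A \ B).image (c * ·)).card :=
        Finset.card_le_card key
    _ ≤ (A \ B).card := Finset.card_image_le
    _ = A.card - B.card := Finset.card_sdiff_of_subset hBA
    _ = A.card - (P ^ (m - 2)).divisors.card := by
        rw [hB, Finset.card_image_of_injective _ (mul_right_injective₀ hc'.ne')]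

lemma main_bound (ε : ℝ) (hε : 0 < ε) (P : ℕ) (hP : 0 < P) :
    ∃ A : Finset ℕ, A.Nonempty ∧ ∀ c c' : ℕ, 0 < c → 0 < c' → c ∣ P → c' ∣ P →
      (((A.image (c * ·)) ∆ (A.image (c' * ·))).card : ℝ) ≤ ε * A.card := by
  set d := P.primeFactors.card with hd
  obtain ⟨m, hm3, hmε'⟩ : ∃ m : ℕ, 3 ≤ m ∧ (4 * d : ℝ) / ε ≤ m :=
    ⟨max 3 (Nat.ceil ((4 * d : ℝ) / ε)), le_max_left _ _, by
      calc (4 * d : ℝ) / ε ≤ (Nat.ceil ((4 * d : ℝ) / ε) : ℝ) := Nat.le_ceil _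
        _ ≤ _ := by exact_mod_cast Nat.le_max_right 3 _⟩
  have hm2 : 2 ≤ m := by omega
  have hmpos : (0 : ℝ) < m := by positivity
  have hmε : (4 * d : ℝ) / m ≤ ε := by
    rw [div_le_iff₀ hmpos]
    rw [div_le_iff₀ hε] at hmε'
    nlinarith
  refine ⟨(P ^ m).divisors, ⟨1, Nat.one_mem_divisors.2 (pow_ne_zero _ hP.ne')⟩, ?_⟩
  have hDE : (1 - 2 * d / m) * ((P ^ m).divisors.card : ℝ)
      ≤ ((P ^ (m - 2)).divisors.card : ℝ) := by
    rw [card_div_pow P hP m (by omega), card_div_pow P hP (m - 2) (by omega)]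
    push_cast
    have hm1R : (1:ℝ) ≤ m := by exact_mod_cast (by omega : 1 ≤ m)
    have hneg : (-2 : ℝ) ≤ -(2 / m) := by
      rw [neg_le_neg_iff]
      rw [div_le_iff₀ hmpos]
      nlinarith
    have bern : (1 : ℝ) - 2 * d / m ≤ (1 - 2 / m) ^ d := by
      have h := one_add_mul_le_pow hneg d
      calc (1 : ℝ) - 2 * d / m = 1 + d * (-(2 / m)) := by ring
        _ ≤ (1 + -(2 / m)) ^ d := h
        _ = (1 - 2 / m) ^ d := by ring_nf
    have h1m : (0 : ℝ) ≤ 1 - 2 / m := by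
      rw [sub_nonneg, div_le_one hmpos]
      exact_mod_cast hm2
    have hfac : ∀ p ∈ P.primeFactors,
        (1 - 2 / (m : ℝ)) * ((m : ℝ) * (P.factorization p : ℝ) + 1)
          ≤ (((m - 2 : ℕ) : ℝ)) * (P.factorization p : ℝ) + 1 := by
      intro p hp
      have hap : (1 : ℝ) ≤ (P.factorization p : ℝ) := by
        exact_mod_cast (Nat.Prime.factorization_pos_of_dvd (Nat.prime_of_mem_primeFactors hp)
          hP.ne' (Nat.dvd_of_mem_primeFactors hp))
      rw [Nat.cast_sub hm2]
      have key : (1 - 2 / (m : ℝ)) * ((m : ℝ) * (P.factorization p : ℝ) + 1)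
          = ((m : ℝ) - 2) * (P.factorization p : ℝ) + 1 - 2 / m := by
        field_simp
        ring
      rw [key]
      have h2m : (0:ℝ) < 2 / m := by positivity
      linarith
    calc (1 - 2 * (d:ℝ) / m) * ∏ p ∈ P.primeFactors, ((m : ℝ) * (P.factorization p) + 1)
        ≤ (1 - 2 / m) ^ d * ∏ p ∈ P.primeFactors, ((m : ℝ) * (P.factorization p) + 1) := by
          apply mul_le_mul_of_nonneg_right bern
          apply Finset.prod_nonneg
          intro p _
          positivity
      _ = ∏ p ∈ P.primeFactors, (1 - 2 / (m:ℝ)) * ((m : ℝ) * (P.factorization p) + 1) := by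
          rw [Finset.prod_mul_distrib, Finset.prod_const, hd]
      _ ≤ ∏ p ∈ P.primeFactors, ((((m - 2 : ℕ)) : ℝ) * (P.factorization p) + 1) := by
          apply Finset.prod_le_prod
          · intro p _; positivity
          · exact hfac
  intro c c' hc hc' hcP hc'P
  have hEA : (P ^ (m - 2)).divisors.card ≤ (P ^ m).divisors.card := by
    apply Finset.card_le_card
    intro x hx
    rw [Nat.mem_divisors] at hx ⊢
    exact ⟨hx.1.trans (pow_dvd_pow P (by omega)), pow_ne_zero _ hP.ne'⟩
  have h1 := aux_sdiff P m hP hm2 hc hc' hcP hc'P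
  have h2 := aux_sdiff P m hP hm2 hc' hc hc'P hcP
  have hcard : (((P ^ m).divisors.image (c * ·)) ∆ ((P ^ m).divisors.image (c' * ·))).card
      = ((P ^ m).divisors.image (c * ·) \ (P ^ m).divisors.image (c' * ·)).card
        + ((P ^ m).divisors.image (c' * ·) \ (P ^ m).divisors.image (c * ·)).card := by
    rw [symmDiff_def]
    exact Finset.card_union_of_disjoint disjoint_sdiff_sdiff
  have htot : (((P ^ m).divisors.image (c * ·)) ∆ ((P ^ m).divisors.image (c' * ·))).card
      + 2 * (P ^ (m - 2)).divisors.card ≤ 2 * (P ^ m).divisors.card := by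
    rw [hcard]; omega
  have htotR : ((((P ^ m).divisors.image (c * ·)) ∆ ((P ^ m).divisors.image (c' * ·))).card : ℝ)
      + 2 * ((P ^ (m - 2)).divisors.card : ℝ) ≤ 2 * ((P ^ m).divisors.card : ℝ) := by
    exact_mod_cast htot
  have hDnn : (0:ℝ) ≤ ((P ^ m).divisors.card : ℝ) := Nat.cast_nonneg _
  have e2 : (4 * (d:ℝ) / m) * ((P ^ m).divisors.card : ℝ) ≤ ε * ((P ^ m).divisors.card : ℝ) :=
    mul_le_mul_of_nonneg_right hmε hDnn
  set D : ℝ := ((P ^ m).divisors.card : ℝ) with hD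
  set E : ℝ := ((P ^ (m - 2)).divisors.card : ℝ) with hE
  set X : ℝ := ((((P ^ m).divisors.image (c * ·)) ∆ ((P ^ m).divisors.image (c' * ·))).card : ℝ)
    with hX
  have key2 : 2*D - 2*((1 - 2*(d:ℝ)/(m:ℝ))*D) = 4*(d:ℝ)/(m:ℝ)*D := by ring
  linarith

lemma multiset_part (A : Finset ℕ) {c c' : ℕ} (hc : 0 < c) (hc' : 0 < c') :
    (msymmDiff (A.val.map (fun a => c * a)) (A.val.map (fun a => c' * a))).card
      = ((A.image (c * ·)) ∆ (A.image (c' * ·))).card := by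
  have him : ∀ b : ℕ, 0 < b → A.val.map (fun a => b * a) = (A.image (b * ·)).val := by
    intro b hb
    rw [Finset.image_val]
    rw [Multiset.dedup_eq_self.2 (A.nodup.map (mul_right_injective₀ hb.ne'))]
  rw [him c hc, him c' hc', msymmDiff]
  rw [← Finset.sdiff_val, ← Finset.sdiff_val, Multiset.card_add]
  rw [symmDiff_def]
  exact (Finset.card_union_of_disjoint disjoint_sdiff_sdiff).symm

/-- For n ≥ 1, positive integers r₁,…,r_{n-1} and ε > 0 there is a
nonempty finite A ⊆ ℕ such that |cA Δ c'A| ≤ ε|A| for all interval sums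
c = r_i+⋯+r_j, c' = r_{i'}+⋯+r_{j'}; consequently the multiset
W = {(r₁a,…,r_{n-1}a) : a ∈ A} satisfies
|{p_i(w)+⋯+p_j(w)} Δ {p_{i'}(w)+⋯+p_{j'}(w)}| ≤ ε|W| for all such intervals. -/
theorem stmt4 (n : ℕ) (hn : 1 ≤ n) (r : Fin (n - 1) → ℕ) (hr : ∀ i, 0 < r i)
    (ε : ℝ) (hε : 0 < ε) :
    ∃ A : Finset ℕ, A.Nonempty ∧
      (∀ i j : Fin (n - 1), i ≤ j → ∀ i' j' : Fin (n - 1), i' ≤ j' →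
        (((A.image ((∑ k ∈ Finset.Icc i j, r k) * ·)) ∆
          (A.image ((∑ k ∈ Finset.Icc i' j', r k) * ·))).card : ℝ) ≤ ε * A.card) ∧
      (∀ i j : Fin (n - 1), i ≤ j → ∀ i' j' : Fin (n - 1), i' ≤ j' →
        letI W : Multiset (Fin (n - 1) → ℕ) := A.val.map (fun a i => r i * a)
        ((msymmDiff (W.map (fun w => ∑ k ∈ Finset.Icc i j, w k))
            (W.map (fun w => ∑ k ∈ Finset.Icc i' j', w k))).card : ℝ)
          ≤ ε * W.card) := by
  set P : ℕ := ∏ i : Fin (n-1), ∏ j : Fin (n-1), max 1 (∑ k ∈ Finset.Icc i j, r k) with hPdef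
  have hP : 0 < P := by
    apply Finset.prod_pos
    intro i _
    apply Finset.prod_pos
    intro j _
    exact lt_of_lt_of_le one_pos (le_max_left _ _)
  have hcpos : ∀ i j : Fin (n-1), i ≤ j → 0 < ∑ k ∈ Finset.Icc i j, r k := by
    intro i j hij
    exact Finset.sum_pos (fun k _ => hr k) (Finset.nonempty_Icc.2 hij)
  have hcdvd : ∀ i j : Fin (n-1), i ≤ j → (∑ k ∈ Finset.Icc i j, r k) ∣ P := by
    intro i j hij
    have h1 : (∑ k ∈ Finset.Icc i j, r k) = max 1 (∑ k ∈ Finset.Icc i j, r k) :=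
      (max_eq_right (hcpos i j hij)).symm
    rw [h1, hPdef]
    exact dvd_trans
      (Finset.dvd_prod_of_mem (fun j => max 1 (∑ k ∈ Finset.Icc i j, r k)) (Finset.mem_univ j))
      (Finset.dvd_prod_of_mem (fun i => ∏ j : Fin (n-1), max 1 (∑ k ∈ Finset.Icc i j, r k))
        (Finset.mem_univ i))
  obtain ⟨A, hAne, hAbound⟩ := main_bound ε hε P hP
  refine ⟨A, hAne, ?_, ?_⟩
  · intro i j hij i' j' hij'
    exact hAbound _ _ (hcpos i j hij) (hcpos i' j' hij') (hcdvd i j hij) (hcdvd i' j' hij')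
  · intro i j hij i' j' hij'
    have hmap : ∀ (i j : Fin (n-1)),
        (A.val.map (fun a (i : Fin (n-1)) => r i * a)).map (fun w => ∑ k ∈ Finset.Icc i j, w k)
          = A.val.map (fun a => (∑ k ∈ Finset.Icc i j, r k) * a) := by
      intro i j
      rw [Multiset.map_map]
      apply Multiset.map_congr rfl
      intro a _
      simp only [Function.comp_apply]
      rw [Finset.sum_mul]
    rw [hmap i j, hmap i' j']
    rw [multiset_part A (hcpos i j hij) (hcpos i' j' hij')]
    have hWcard : ((A.val.map (fun a (i : Fin (n-1)) => r i * a)).card : ℝ) = (A.card : ℝ) := by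
      rw [Multiset.card_map]
      rfl
    rw [hWcard]
    exact hAbound _ _ (hcpos i j hij) (hcpos i' j' hij') (hcdvd i j hij) (hcdvd i' j' hij')
end

section
/- Amplification lemma: Let G be a group acting on a set X, let V ⊆ X be finite, let ε > 0, and suppose E ⊆ G is a nonempty finite set and g ∈ G is such that (a) for all x, y ∈ V and all h ∈ E, and all n, the quantity a_n(hx, hy) := |{g^k(hx) : 1 ≤ k ≤ n} ∩ {g^k(hy) : 1 ≤ k ≤ n}|/n → 1 whenever hx and hy lie in the same 'class', and (b) |{h ∈ E : hx and hy in the same class}| ≥ (1-ε)|E| for all x,y ∈ V. Then for every ε' > ε there exists n such that E' = {g^k h : 1 ≤ k ≤ n, h ∈ E} (a multiset of size n|E|) satisfies |E'x Δ E'y| ≤ 2ε'|E'| for all x, y ∈ V, with multiset cardinalities. -/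
/-!
Grouped by `h ∈ E`, the multiset `E'x` is the sum of the orbit segments
`{gᵏ(hx) : 1 ≤ k ≤ n}`, so `|E'x ∩ E'y|` is at least the sum over `h` of the intersections
of the segments of `hx` and `hy`. For the good `h` (at least `(1 - ε)|E|` of them) that
intersection eventually has size at least `(1 - δ) n` with `δ = ε' - ε`, and
`|E'x Δ E'y| = 2 (n|E| - |E'x ∩ E'y|)`.
-/

open Filter

/-- Normalized multiset intersection a_n(z,w) = |{gᵏz : 1 ≤ k ≤ n} ∩ {gᵏw : 1 ≤ k ≤ n}|/n. -/
noncomputable def aSeq {G X : Type*} [Group G] [MulAction G X] [DecidableEq X]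
    (g : G) (z w : X) (n : ℕ) : ℝ :=
  ((((Finset.Icc 1 n).val.map fun k : ℕ => g ^ k • z) ∩
    ((Finset.Icc 1 n).val.map fun k : ℕ => g ^ k • w)).card : ℝ) / n

/-- z and w are in the same class if a_n(z,w) → 1. -/
def sameClass {G X : Type*} [Group G] [MulAction G X] [DecidableEq X]
    (g : G) (z w : X) : Prop :=
  Tendsto (aSeq g z w) atTop (nhds 1)

namespace Multiset

theorem map_product_eq_bind {α β γ : Type*} (a : Multiset α) (b : Multiset β)
    (f : α × β → γ) :
    (a ×ˢ b).map f = b.bind fun y => a.map fun x => f (x, y) := by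
  change (a.bind fun x => b.map (Prod.mk x)).map f = _
  rw [map_bind, ← bind_map_comm]
  simp only [map_map, Function.comp_def]

variable {α β : Type*} [DecidableEq β]

theorem card_msymmDiff_add_two_mul_card_inter (s t : Multiset β) :
    card (msymmDiff s t) + 2 * card (s ∩ t) = card s + card t := by
  have hs := congrArg card (sub_add_inter s t)
  have ht := congrArg card (sub_add_inter t s)
  rw [inter_comm] at ht
  rw [card_add] at hs ht
  rw [msymmDiff, card_add]
  omega

theorem inter_add_inter_le (s₁ s₂ t₁ t₂ : Multiset β) :
    s₁ ∩ t₁ + s₂ ∩ t₂ ≤ (s₁ + s₂) ∩ (t₁ + t₂) :=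
  le_inter (add_le_add inter_le_left inter_le_left) (add_le_add inter_le_right inter_le_right)

theorem sum_card_inter_le_card_bind_inter (s : Multiset α) (F H : α → Multiset β) :
    (s.map fun a => card (F a ∩ H a)).sum ≤ card (s.bind F ∩ s.bind H) := by
  induction s using Multiset.induction with
  | empty => simp
  | cons a s ih =>
    rw [map_cons, sum_cons, cons_bind, cons_bind]
    calc card (F a ∩ H a) + (s.map fun a => card (F a ∩ H a)).sum
        ≤ card (F a ∩ H a + s.bind F ∩ s.bind H) := by rw [card_add]; omega
      _ ≤ card ((F a + s.bind F) ∩ (H a + s.bind H)) := card_le_card (inter_add_inter_le ..)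

end Multiset

section Amplification

open Multiset

variable {G X : Type*} [Group G] [MulAction G X]

def orbitSegment (g : G) (n : ℕ) (z : X) : Multiset X :=
  (Finset.Icc 1 n).val.map fun k => g ^ k • z

def amplify (g : G) (E : Finset G) (n : ℕ) : Multiset G :=
  ((Finset.Icc 1 n) ×ˢ E).val.map fun p => g ^ p.1 * p.2

variable {g : G} {n : ℕ}

@[simp]
theorem card_amplify (E : Finset G) : card (amplify g E n) = n * E.card := by
  simp [amplify]

theorem map_smul_amplify (E : Finset G) (z : X) :
    (amplify g E n).map (· • z) = E.val.bind fun h => orbitSegment g n (h • z) := by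
  simp only [amplify, orbitSegment, Multiset.map_map, Finset.product_val]
  rw [map_product_eq_bind]
  simp [mul_smul]

variable [DecidableEq X]

theorem sameClass.eventually_le_card_inter {z w : X} (hzw : sameClass g z w) {c : ℝ}
    (hc : c < 1) :
    ∀ᶠ n in atTop, c * n ≤ card (orbitSegment g n z ∩ orbitSegment g n w) := by
  filter_upwards [hzw.eventually (eventually_ge_nhds hc), eventually_gt_atTop 0] with n hn hn0
  rwa [aSeq, le_div_iff₀ (by exact_mod_cast hn0)] at hn

theorem card_msymmDiff_map_amplify_le {E A : Finset G} {ε δ : ℝ} (hδ : 0 ≤ δ)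
    (hAE : A ⊆ E) (hA : (1 - ε) * E.card ≤ A.card) {x y : X}
    (hseg : ∀ h ∈ A,
      (1 - δ) * n ≤ card (orbitSegment g n (h • x) ∩ orbitSegment g n (h • y))) :
    (card (msymmDiff ((amplify g E n).map (· • x)) ((amplify g E n).map (· • y))) : ℝ)
      ≤ 2 * (ε + δ) * card (amplify g E n) := by
  have hsum :
      ∑ h ∈ A, card (orbitSegment g n (h • x) ∩ orbitSegment g n (h • y)) ≤
        card ((amplify g E n).map (· • x) ∩ (amplify g E n).map (· • y)) :=
    calc _ ≤ ∑ h ∈ E, card (orbitSegment g n (h • x) ∩ orbitSegment g n (h • y)) :=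
          Finset.sum_le_sum_of_subset hAE
      _ ≤ _ := by
          rw [map_smul_amplify, map_smul_amplify]
          exact sum_card_inter_le_card_bind_inter ..
  have hsym := card_msymmDiff_add_two_mul_card_inter
    ((amplify g E n).map (· • x)) ((amplify g E n).map (· • y))
  simp only [card_map, card_amplify] at hsym ⊢
  generalize card ((amplify g E n).map (· • x) ∩ (amplify g E n).map (· • y)) = I
    at hsum hsym
  generalize card (msymmDiff (α := X) _ _) = D at hsym ⊢
  have hI : A.card * ((1 - δ) * n) ≤ (I : ℝ) := by
    have := Finset.card_nsmul_le_sum A _ _ hseg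
    rw [nsmul_eq_mul] at this
    exact this.trans (by exact_mod_cast hsum)
  have hAcard : (A.card : ℝ) ≤ E.card := by exact_mod_cast Finset.card_le_card hAE
  have hD : (D : ℝ) + 2 * I = n * E.card + n * E.card := by exact_mod_cast hsym
  have hn : (0 : ℝ) ≤ n := n.cast_nonneg
  push_cast
  nlinarith [mul_le_mul_of_nonneg_left hA hn, mul_le_mul_of_nonneg_left hAcard (mul_nonneg hδ hn)]

end Amplification

open scoped Classical in
theorem stmt7_general {G X : Type*} [Group G] [MulAction G X] [DecidableEq X]
    (V : Finset X) (ε : ℝ) (E : Finset G) (g : G)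
    (hb : ∀ x ∈ V, ∀ y ∈ V,
      (1 - ε) * E.card ≤ ((E.filter fun h => sameClass g (h • x) (h • y)).card : ℝ)) :
    ∀ ε' > ε, ∃ n : ℕ, 1 ≤ n ∧
      letI E' : Multiset G := ((Finset.Icc 1 n) ×ˢ E).val.map fun p => g ^ p.1 * p.2
      ∀ x ∈ V, ∀ y ∈ V,
        ((msymmDiff (E'.map (· • x)) (E'.map (· • y))).card : ℝ) ≤ 2 * ε' * E'.card := by
  intro ε' hε'
  have hseg : ∀ᶠ n in atTop, ∀ x ∈ V, ∀ y ∈ V,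
      ∀ h ∈ E.filter fun h => sameClass g (h • x) (h • y),
        (1 - (ε' - ε)) * n ≤
          Multiset.card (orbitSegment g n (h • x) ∩ orbitSegment g n (h • y)) := by
    simp only [eventually_all_finset]
    exact fun x _ y _ h hh => (Finset.mem_filter.1 hh).2.eventually_le_card_inter (by linarith)
  obtain ⟨n, hn, hn1⟩ := (hseg.and (eventually_ge_atTop 1)).exists
  refine ⟨n, hn1, fun x hx y hy => ?_⟩
  have := card_msymmDiff_map_amplify_le (sub_nonneg.2 hε'.le) (Finset.filter_subset _ E)
    (hb x hx y hy) (hn x hx y hy)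
  rwa [add_sub_cancel] at this

open scoped Classical in
/-- amplification lemma: if for all x, y ∈ V at least (1-ε)|E| of the
elements h ∈ E put hx and hy in the same class (a_n(hx,hy) → 1), then for every
ε' > ε there is n such that the multiset E' = {gᵏh : 1 ≤ k ≤ n, h ∈ E} satisfies
|E'x Δ E'y| ≤ 2ε'|E'| for all x, y ∈ V. -/
theorem stmt7 {G X : Type*} [Group G] [MulAction G X] [DecidableEq X]
    (V : Finset X) (ε : ℝ) (hε : 0 < ε) (E : Finset G) (hE : E.Nonempty) (g : G)
    (hb : ∀ x ∈ V, ∀ y ∈ V,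
      (1 - ε) * E.card ≤ ((E.filter fun h => sameClass g (h • x) (h • y)).card : ℝ)) :
    ∀ ε' > ε, ∃ n : ℕ, 1 ≤ n ∧
      letI E' : Multiset G := ((Finset.Icc 1 n) ×ˢ E).val.map fun p => g ^ p.1 * p.2
      ∀ x ∈ V, ∀ y ∈ V,
        ((msymmDiff (E'.map (· • x)) (E'.map (· • y))).card : ℝ) ≤ 2 * ε' * E'.card :=
  stmt7_general V ε E g hb
end
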